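/- arXiv:2410.09473 — 4 statements merged into one kernel-verified Lean document; each statement's English description precedes it below -/
import Mathlib

section
/- Let K be a field with a nonarchimedean absolute value |·| that is multiplicative, let c ∈ K with |c| = 1, and let n be a natural number. Let h = Σ_i a_i t^i be a power series with sup_i |a_i|(i+1)^(−n) < ∞, and let g = (t − c)·h, with coefficients g_i = a_{i−1} − c·a_i (with a_{−1} = 0). Then sup_i |a_i|·(i+1)^(−n) ≤ sup_i |g_i|·(i+1)^(−n). -/
/-- Multiplication by `(t − c)` with `|c| = 1` is norm-nondecreasing on the log-growth `n`
level: if `g = (t − c)·h`, i.e. `g_i = a_{i−1} − c·a_i` (with `a_{−1} = 0`), then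
`sup_i |a_i|(i+1)^(−n) ≤ sup_i |g_i|(i+1)^(−n)`. -/
theorem stmt9 {K : Type*} [Field K] (v : AbsoluteValue K ℝ)
    (hna : IsNonarchimedean (fun x : K => v x))
    (c : K) (hc : v c = 1) (n : ℕ) (a g : ℕ → K)
    (hbdd : BddAbove (Set.range fun i => v (a i) / ((i : ℝ) + 1) ^ n))
    (hg0 : g 0 = -(c * a 0))
    (hg : ∀ i, g (i + 1) = a i - c * a (i + 1)) :
    (⨆ i, v (a i) / ((i : ℝ) + 1) ^ n) ≤ ⨆ i, v (g i) / ((i : ℝ) + 1) ^ n := by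
  have hpos : ∀ i : ℕ, (0:ℝ) < ((i : ℝ) + 1) ^ n := by
    intro i; positivity
  have hmono : ∀ i : ℕ, ((i : ℝ) + 1) ^ n ≤ ((i : ℝ) + 1 + 1) ^ n := by
    intro i
    apply pow_le_pow_left₀ (by positivity)
    linarith
  set S := ⨆ i, v (a i) / ((i : ℝ) + 1) ^ n with hS
  have hSle : ∀ i, v (a i) / ((i : ℝ) + 1) ^ n ≤ S := fun i => le_ciSup hbdd i
  -- v (g 0) = v (a 0)
  have hvg0 : v (g 0) = v (a 0) := by
    rw [hg0, v.map_neg, v.map_mul, hc, one_mul]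
  -- v (g (i+1)) ≤ max (v (a i)) (v (a (i+1)))
  have hvg : ∀ i, v (g (i + 1)) ≤ max (v (a i)) (v (a (i + 1))) := by
    intro i
    rw [hg i, sub_eq_add_neg]
    refine (hna _ _).trans ?_
    simp only [v.map_neg, v.map_mul, hc, one_mul, le_refl]
  -- RHS range is bounded above by S
  have hbddg : BddAbove (Set.range fun i => v (g i) / ((i : ℝ) + 1) ^ n) := by
    refine ⟨S, ?_⟩
    rintro x ⟨i, rfl⟩
    match i with
    | 0 =>
        simp only [Nat.cast_zero, zero_add]
        rw [hvg0]
        simpa using hSle 0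
    | (j+1) =>
        refine le_trans (div_le_div_of_nonneg_right (hvg j) (hpos (j+1)).le) ?_
        rcases le_total (v (a j)) (v (a (j+1))) with h | h
        · rw [max_eq_right h]
          exact hSle (j+1)
        · rw [max_eq_left h]
          refine le_trans ?_ (hSle j)
          apply div_le_div_of_nonneg_left (v.nonneg _) (hpos j)
          push_cast
          exact hmono j
  set M := ⨆ i, v (g i) / ((i : ℝ) + 1) ^ n with hM
  have hMle : ∀ i, v (g i) / ((i : ℝ) + 1) ^ n ≤ M := fun i => le_ciSup hbddg i
  have hM0 : (0:ℝ) ≤ M := le_trans (by positivity) (hMle 0)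
  -- key: v (a i) ≤ M * (i+1)^n
  have key : ∀ i, v (a i) ≤ M * ((i : ℝ) + 1) ^ n := by
    intro i
    induction i with
    | zero =>
        have h := hMle 0
        rw [div_le_iff₀ (hpos 0)] at h
        rw [← hvg0]
        simpa using h
    | succ j ih =>
        -- c * a (j+1) = a j - g (j+1)
        have hca : c * a (j + 1) = a j - g (j + 1) := by
          rw [hg j]; ring
        have h1 : v (a (j + 1)) = v (c * a (j + 1)) := by
          rw [v.map_mul, hc, one_mul]
        have h2 : v (a (j + 1)) ≤ max (v (a j)) (v (g (j + 1))) := by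
          rw [h1, hca, sub_eq_add_neg]
          refine (hna _ _).trans ?_
          simp [v.map_neg]
        have hgj : v (g (j + 1)) ≤ M * ((j : ℝ) + 1 + 1) ^ n := by
          have := hMle (j + 1)
          rw [div_le_iff₀ (hpos (j+1))] at this
          push_cast at this ⊢
          linarith
        have haj : v (a j) ≤ M * ((j : ℝ) + 1 + 1) ^ n := by
          refine ih.trans ?_
          exact mul_le_mul_of_nonneg_left (hmono j) hM0
        push_cast
        exact h2.trans (max_le haj hgj)
  refine ciSup_le fun i => ?_
  rw [div_le_iff₀ (hpos i)]
  calc v (a i) ≤ M * ((i : ℝ) + 1) ^ n := key i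
    _ = M * ((i : ℝ) + 1) ^ n := rfl
end

section
/- Let R be a commutative Noetherian ring and r ∈ R. Then the element y − C(r) (the polynomial y minus the constant r) is a non-zero-divisor in the formal power series ring R⟦y⟧. -/
/-!
If `φ * (X - C r) = 0`, comparing coefficients gives `aₙ = aₙ₊₁ * r` and `a₀ * r = 0` for the
coefficients `aₙ` of `φ`. So `(aₙ)` is a backward orbit of `0` under multiplication by `r`: each
`aₙ` is killed by `r ^ (n + 1)` and lies in the image of every power of `r`. In a Noetherian ring
the kernels of the powers of `r` stabilize, so for large `N` the kernel and the image of `r ^ N`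
meet only in `0`.
-/

namespace Module.End

variable {R M : Type*} [Semiring R] [AddCommMonoid M] [Module R M]

theorem pow_apply_add_eq_of_apply_succ_eq {f : End R M} {a : ℕ → M}
    (hsucc : ∀ n, f (a (n + 1)) = a n) (n k : ℕ) : (f ^ k) (a (n + k)) = a n := by
  induction k with
  | zero => rfl
  | succ k ih => rw [pow_succ, mul_apply, ← add_assoc, hsucc, ih]

theorem pow_succ_apply_eq_zero_of_apply_succ_eq {f : End R M} {a : ℕ → M}
    (hsucc : ∀ n, f (a (n + 1)) = a n) (hzero : f (a 0) = 0) (n : ℕ) :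
    (f ^ (n + 1)) (a n) = 0 := by
  have h := pow_apply_add_eq_of_apply_succ_eq hsucc 0 n
  rw [zero_add] at h
  rw [pow_succ', mul_apply, h, hzero]

theorem eq_zero_of_apply_succ_eq_of_apply_zero_eq_zero [IsNoetherian R M] {f : End R M}
    {a : ℕ → M} (hsucc : ∀ n, f (a (n + 1)) = a n) (hzero : f (a 0) = 0) : a = 0 := by
  funext n
  obtain ⟨N, hdisj, hN⟩ :=
    (f.eventually_disjoint_ker_pow_range_pow.and (Filter.eventually_ge_atTop (n + 1))).exists
  refine Submodule.disjoint_def.mp hdisj (a n) ?_ (LinearMap.mem_range.mpr ⟨a (n + N), ?_⟩)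
  · exact pow_map_zero_of_le hN (pow_succ_apply_eq_zero_of_apply_succ_eq hsucc hzero n)
  · exact pow_apply_add_eq_of_apply_succ_eq hsucc n N

end Module.End

namespace PowerSeries

variable {R : Type*} [CommRing R]

theorem coeff_zero_mul_X_sub_C (φ : PowerSeries R) (r : R) :
    coeff 0 (φ * (X - C r)) = -(coeff 0 φ * r) := by
  simp [mul_sub]

theorem coeff_succ_mul_X_sub_C (φ : PowerSeries R) (r : R) (n : ℕ) :
    coeff (n + 1) (φ * (X - C r)) = coeff n φ - coeff (n + 1) φ * r := by
  rw [mul_sub, map_sub, coeff_succ_mul_X, coeff_mul_C]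

end PowerSeries

/-- Fields' theorem: for a commutative Noetherian ring `R` and `r ∈ R`, the element
`y − r` is a non-zero-divisor in `R⟦y⟧`. -/
theorem stmt10 {R : Type*} [CommRing R] [IsNoetherianRing R] (r : R) :
    (PowerSeries.X - PowerSeries.C r) ∈ nonZeroDivisors (PowerSeries R) := by
  refine mem_nonZeroDivisors_iff_right.mpr fun φ hφ => PowerSeries.ext fun n => ?_
  set a : ℕ → R := fun n => PowerSeries.coeff n φ
  have hsucc (n : ℕ) : a (n + 1) * r = a n := by
    have h := PowerSeries.coeff_succ_mul_X_sub_C φ r n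
    rw [hφ, map_zero] at h
    linear_combination h
  have hzero : a 0 * r = 0 := by
    have h := PowerSeries.coeff_zero_mul_X_sub_C φ r
    rw [hφ, map_zero] at h
    linear_combination h
  exact congrFun (Module.End.eq_zero_of_apply_succ_eq_of_apply_zero_eq_zero
    (f := LinearMap.mulRight R r) hsucc hzero) n
end

section
/- Let R be a commutative Noetherian ring and r_1, r_2 ∈ R. Then (y_1 − r_1, y_2 − r_2) is a regular sequence in the formal power series ring R⟦y_1, y_2⟧: y_1 − r_1 is a non-zero-divisor, and y_2 − r_2 is a non-zero-divisor modulo the ideal (y_1 − r_1). -/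
/-!
If `(X - r) f = 0` in `A⟦X⟧`, the coefficients satisfy `r f₀ = 0` and `fₙ = r fₙ₊₁`, so every
`fₙ` is divisible by all powers of `r`. For Noetherian `A`, Krull's intersection theorem then gives
`fₙ = c r fₙ` for some `c`, and `fₙ = 0` follows by induction on `n`.

For the second element, expand in `y₂` over `A = R⟦y₁⟧`, which is again Noetherian. Modulo the
constant `y₁ - r₁` this ring is `(A ⧸ (y₁ - r₁))⟦y₂⟧`, where `y₂ - r₂` has the same form `X - r`
over a Noetherian ring.
-/

open scoped nonZeroDivisors

theorem eq_zero_of_mul_eq_zero_of_forall_pow_dvd {A : Type*} [CommRing A] [IsNoetherianRing A]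
    {r x : A} (hrx : r * x = 0) (hdvd : ∀ k, r ^ k ∣ x) : x = 0 := by
  have hx : x ∈ (⨅ k : ℕ, Ideal.span {r} ^ k • ⊤ : Ideal A) := by
    refine Submodule.mem_iInf _ |>.mpr fun k => ?_
    rw [smul_eq_mul, Ideal.mul_top, Ideal.span_singleton_pow]
    exact Ideal.mem_span_singleton.mpr (hdvd k)
  obtain ⟨⟨b, hb⟩, hbx⟩ := (Ideal.mem_iInf_smul_pow_eq_bot_iff _ x).mp hx
  obtain ⟨c, rfl⟩ := Ideal.mem_span_singleton'.mp hb
  rw [← hbx, smul_eq_mul, mul_assoc, hrx, mul_zero]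

namespace PowerSeries

variable {A : Type*} [CommRing A]

theorem X_sub_C_mem_nonZeroDivisors [IsNoetherianRing A] (r : A) : X - C r ∈ A⟦X⟧⁰ := by
  refine mem_nonZeroDivisors_iff_right.mpr fun f hf => ?_
  have hcoeff (n : ℕ) : coeff n ((X - C r) * f) = 0 := by rw [mul_comm, hf, map_zero]
  have hzero : r * coeff 0 f = 0 := by
    simpa [sub_mul, coeff_C_mul] using hcoeff 0
  have hshift (n : ℕ) : coeff n f = r * coeff (n + 1) f := by
    simpa [sub_mul, coeff_C_mul, coeff_succ_X_mul, sub_eq_zero] using hcoeff (n + 1)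
  have hdvd (k n : ℕ) : r ^ k ∣ coeff n f := by
    induction k generalizing n with
    | zero => exact pow_zero r ▸ one_dvd _
    | succ k ih => rw [pow_succ', hshift n]; exact mul_dvd_mul_left r (ih (n + 1))
  ext n
  rw [map_zero]
  induction n with
  | zero => exact eq_zero_of_mul_eq_zero_of_forall_pow_dvd hzero (hdvd · 0)
  | succ n ih =>
    exact eq_zero_of_mul_eq_zero_of_forall_pow_dvd (by rw [← hshift, ih]) (hdvd · (n + 1))

theorem map_mk_span_singleton_eq_zero_iff {a : A} {f : A⟦X⟧} :
    map (Ideal.Quotient.mk (Ideal.span {a})) f = 0 ↔ f ∈ Ideal.span {C a} := by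
  constructor
  · intro hf
    have hdvd (n : ℕ) : a ∣ coeff n f := by
      rw [← Ideal.mem_span_singleton, ← Ideal.Quotient.eq_zero_iff_mem, ← coeff_map, hf,
        map_zero]
    choose g hg using hdvd
    refine Ideal.mem_span_singleton.mpr ⟨mk g, ?_⟩
    ext n
    rw [coeff_C_mul, coeff_mk]
    exact hg n
  · intro hf
    obtain ⟨g, rfl⟩ := Ideal.mem_span_singleton.mp hf
    rw [map_mul, map_C, Ideal.Quotient.eq_zero_iff_mem.mpr (Ideal.mem_span_singleton_self a),
      map_zero, zero_mul]

theorem mk_X_sub_C_mem_nonZeroDivisors [IsNoetherianRing A] (a r : A) :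
    Ideal.Quotient.mk (Ideal.span {C a}) (X - C r) ∈ (A⟦X⟧ ⧸ Ideal.span {C a})⁰ := by
  refine mem_nonZeroDivisors_iff_right.mpr fun g hg => ?_
  obtain ⟨f, rfl⟩ := Ideal.Quotient.mk_surjective g
  rw [← map_mul, Ideal.Quotient.eq_zero_iff_mem, ← map_mk_span_singleton_eq_zero_iff, map_mul,
    map_sub, map_X, map_C] at hg
  rw [Ideal.Quotient.eq_zero_iff_mem, ← map_mk_span_singleton_eq_zero_iff]
  exact mem_nonZeroDivisors_iff_right.mp
    (X_sub_C_mem_nonZeroDivisors (Ideal.Quotient.mk (Ideal.span {a}) r)) _ hg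

end PowerSeries

namespace MvPowerSeries

variable {R : Type*} [CommRing R] [IsNoetherianRing R] {n : ℕ}

theorem X_zero_sub_C_mem_nonZeroDivisors (r : R) :
    X 0 - C r ∈ (MvPowerSeries (Fin (n + 1)) R)⁰ := by
  refine mem_nonZeroDivisors_of_injective (finSuccEquiv R n).injective ?_
  rw [map_sub, finSuccEquiv_X_zero, finSuccEquiv_C]
  exact PowerSeries.X_sub_C_mem_nonZeroDivisors _

theorem mk_X_one_sub_C_mem_nonZeroDivisors (r₁ r₂ : R) :
    Ideal.Quotient.mk (Ideal.span {X 0 - C r₁}) (X 1 - C r₂) ∈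
      (MvPowerSeries (Fin (n + 2)) R ⧸ Ideal.span {X 0 - C r₁})⁰ := by
  let e := ((renameEquiv R (Equiv.swap 0 1)).trans (finSuccEquiv R (n + 1))).toRingEquiv
  have he (p : MvPowerSeries (Fin (n + 2)) R) :
      e p = finSuccEquiv R (n + 1) (rename (Equiv.swap 0 1) p) := rfl
  have he₀ : e (X 0 - C r₁) = PowerSeries.C (X 0 - C r₁) := by
    rw [he, map_sub, map_sub, rename_X, rename_C, Equiv.swap_apply_left, ← Fin.succ_zero_eq_one,
      finSuccEquiv_X_succ, finSuccEquiv_C, map_sub]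
  have he₁ : e (X 1 - C r₂) = PowerSeries.X - PowerSeries.C (C r₂) := by
    rw [he, map_sub, map_sub, rename_X, rename_C, Equiv.swap_apply_right, finSuccEquiv_X_zero,
      finSuccEquiv_C]
  have hspan : Ideal.span {PowerSeries.C (X 0 - C r₁ : MvPowerSeries (Fin (n + 1)) R)} =
      (Ideal.span {X 0 - C r₁}).map (e : MvPowerSeries (Fin (n + 2)) R →+* _) := by
    rw [Ideal.map_span, Set.image_singleton, RingEquiv.coe_toRingHom, he₀]
  refine mem_nonZeroDivisors_of_injective (Ideal.quotientEquiv _ _ e hspan).injective ?_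
  rw [Ideal.quotientEquiv_mk, he₁]
  exact PowerSeries.mk_X_sub_C_mem_nonZeroDivisors _ _

end MvPowerSeries

/-- For a commutative Noetherian ring `R` and `r₁, r₂ ∈ R`, the sequence
`(y₁ − r₁, y₂ − r₂)` is regular in `R⟦y₁, y₂⟧`: `y₁ − r₁` is a non-zero-divisor, and
`y₂ − r₂` is a non-zero-divisor modulo the ideal `(y₁ − r₁)`. -/
theorem stmt11 {R : Type*} [CommRing R] [IsNoetherianRing R] (r₁ r₂ : R) :
    (MvPowerSeries.X (0 : Fin 2) - MvPowerSeries.C (σ := Fin 2) (R := R) r₁) ∈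
        nonZeroDivisors (MvPowerSeries (Fin 2) R) ∧
      Ideal.Quotient.mk
          (Ideal.span {MvPowerSeries.X (0 : Fin 2) - MvPowerSeries.C (σ := Fin 2) (R := R) r₁})
          (MvPowerSeries.X (1 : Fin 2) - MvPowerSeries.C (σ := Fin 2) (R := R) r₂) ∈
        nonZeroDivisors
          (MvPowerSeries (Fin 2) R ⧸
            Ideal.span {MvPowerSeries.X (0 : Fin 2) - MvPowerSeries.C (σ := Fin 2) (R := R) r₁}) :=
  ⟨MvPowerSeries.X_zero_sub_C_mem_nonZeroDivisors r₁,
    MvPowerSeries.mk_X_one_sub_C_mem_nonZeroDivisors (n := 0) r₁ r₂⟩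
end

section
/- Let K be a field with a nonarchimedean absolute value, let n be a natural number, and let f = Σ_{i,j} a_{ij} t^i x^j be a power series in two variables with ‖f‖_n := sup_{i,j} |a_{ij}|·((i+1)(j+1))^(−n) < ∞. Define b_{h,s} = Σ_{l=0}^{s} a_{h+1+l, s−l}. Then sup_{h,s} |b_{h,s}|·((h+1)(s+1))^(−2n) ≤ 2^n · ‖f‖_n. -/
private lemma sum_le_of_forall_le {K : Type*} [Field K] (v : AbsoluteValue K ℝ)
    (hna : IsNonarchimedean (fun x : K => v x)) (g : ℕ → K) (t : Finset ℕ)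
    {C : ℝ} (hC : 0 ≤ C) (h : ∀ l ∈ t, v (g l) ≤ C) :
    v (∑ l ∈ t, g l) ≤ C := by
  induction t using Finset.induction_on with
  | empty => simpa using hC
  | @insert c t0 hc ih =>
    rw [Finset.sum_insert hc]
    refine le_trans (hna _ _) (max_le (h c (by simp)) (ih fun l hl => h l (by simp [hl])))

/-- Division by `(t − x)` is bounded by `2^n` from the log-growth `n` norm to the
log-growth `2n` norm: for `f = Σ a_{ij} t^i x^j` with
`‖f‖_n = sup |a_{ij}|((i+1)(j+1))^(−n) < ∞` and `b_{h,s} = Σ_{l=0}^{s} a_{h+1+l, s−l}`,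
one has `sup |b_{h,s}|((h+1)(s+1))^(−2n) ≤ 2^n ‖f‖_n`. -/
theorem stmt16 {K : Type*} [Field K] (v : AbsoluteValue K ℝ)
    (hna : IsNonarchimedean (fun x : K => v x))
    (n : ℕ) (a : ℕ → ℕ → K)
    (hbdd : BddAbove (Set.range fun p : ℕ × ℕ =>
      v (a p.1 p.2) / (((p.1 : ℝ) + 1) * ((p.2 : ℝ) + 1)) ^ n)) :
    (⨆ p : ℕ × ℕ,
        v (∑ l ∈ Finset.range (p.2 + 1), a (p.1 + 1 + l) (p.2 - l)) /
          (((p.1 : ℝ) + 1) * ((p.2 : ℝ) + 1)) ^ (2 * n)) ≤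
      2 ^ n * ⨆ p : ℕ × ℕ, v (a p.1 p.2) / (((p.1 : ℝ) + 1) * ((p.2 : ℝ) + 1)) ^ n := by
  set S := ⨆ p : ℕ × ℕ, v (a p.1 p.2) / (((p.1 : ℝ) + 1) * ((p.2 : ℝ) + 1)) ^ n with hS
  have hterm : ∀ p : ℕ × ℕ,
      v (a p.1 p.2) / (((p.1 : ℝ) + 1) * ((p.2 : ℝ) + 1)) ^ n ≤ S :=
    fun p => le_ciSup hbdd p
  have hS0 : 0 ≤ S := le_trans (by positivity) (hterm (0, 0))
  refine ciSup_le fun p => ?_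
  obtain ⟨h, s⟩ := p
  have hDpos : (0:ℝ) < (((h:ℝ) + 1) * ((s:ℝ) + 1)) ^ (2 * n) := by positivity
  rw [div_le_iff₀ hDpos]
  refine sum_le_of_forall_le v hna _ _ (by positivity) fun l hl => ?_
  have hls : l ≤ s := by simpa [Nat.lt_succ_iff] using Finset.mem_range.mp hl
  have h1 := hterm (h + 1 + l, s - l)
  have hdpos : (0:ℝ) < ((((h+1+l : ℕ):ℝ) + 1) * (((s-l : ℕ):ℝ) + 1)) ^ n := by positivity
  rw [div_le_iff₀ hdpos] at h1
  refine h1.trans ?_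
  have key : ((((h+1+l : ℕ):ℝ) + 1) * (((s-l : ℕ):ℝ) + 1)) ^ n ≤
      2 ^ n * (((h:ℝ) + 1) * ((s:ℝ) + 1)) ^ (2 * n) := by
    have hsl : ((s - l : ℕ) : ℝ) ≤ (s : ℝ) := by
      exact_mod_cast Nat.sub_le s l
    have hlr : (l : ℝ) ≤ (s : ℝ) := by exact_mod_cast hls
    calc ((((h+1+l : ℕ):ℝ) + 1) * (((s-l : ℕ):ℝ) + 1)) ^ n
        ≤ (2 * ((((h:ℝ) + 1) * ((s:ℝ) + 1)) ^ 2)) ^ n := by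
          apply pow_le_pow_left₀ (by positivity)
          push_cast
          have h0 : (0:ℝ) ≤ (h:ℝ) := Nat.cast_nonneg h
          have s0 : (0:ℝ) ≤ (s:ℝ) := Nat.cast_nonneg s
          have l0 : (0:ℝ) ≤ (l:ℝ) := Nat.cast_nonneg l
          nlinarith [sq_nonneg ((h:ℝ)), sq_nonneg ((s:ℝ))]
      _ = 2 ^ n * (((h:ℝ) + 1) * ((s:ℝ) + 1)) ^ (2 * n) := by
          rw [mul_pow, ← pow_mul, mul_comm 2 n, pow_mul]
  calc S * ((((h+1+l : ℕ):ℝ) + 1) * (((s-l : ℕ):ℝ) + 1)) ^ n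
      ≤ S * (2 ^ n * (((h:ℝ) + 1) * ((s:ℝ) + 1)) ^ (2 * n)) := by
        exact mul_le_mul_of_nonneg_left key hS0
    _ = 2 ^ n * S * (((h:ℝ) + 1) * ((s:ℝ) + 1)) ^ (2 * n) := by ring
end
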